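/- arXiv:1004.0543 — 2 statements merged into one kernel-verified Lean document; each statement's English description precedes it below -/
import Mathlib

section
/- Let λ_1, ..., λ_n be real numbers with λ_i > -1 for all i and n ≥ 2. If ∏_{i=1}^n (1 + λ_i) = e^F for some real F, then ∑_{i=1}^n 1/(1+λ_i) ≥ (∑_{i=1}^n (1+λ_i))^(1/(n-1)) · e^(-F/(n-1)). -/
lemma aux_sum_prod_erase {ι : Type*} [DecidableEq ι] (x : ι → ℝ) (hx : ∀ i, 0 ≤ x i)
    (s : Finset ι) :
    s.Nonempty → ∑ i ∈ s, ∏ j ∈ s.erase i, x j ≤ (∑ j ∈ s, x j) ^ (s.card - 1) := by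
  induction s using Finset.induction_on with
  | empty => intro h; simp at h
  | insert _ _ ha =>
    rename_i a t IH
    intro _
    rcases t.eq_empty_or_nonempty with rfl | ht
    · simp
    · have hcard : 1 ≤ t.card := Finset.card_pos.mpr ht
      rw [Finset.sum_insert ha, Finset.erase_insert ha, Finset.card_insert_of_notMem ha]
      have hst : (0:ℝ) ≤ ∑ j ∈ t, x j := Finset.sum_nonneg fun j _ => hx j
      have h1 : ∑ i ∈ t, ∏ j ∈ (insert a t).erase i, x j
          = x a * ∑ i ∈ t, ∏ j ∈ t.erase i, x j := by
        rw [Finset.mul_sum]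
        refine Finset.sum_congr rfl fun i hi => ?_
        have hia : i ≠ a := by rintro rfl; exact ha hi
        rw [Finset.erase_insert_of_ne hia.symm,
          Finset.prod_insert (fun h => ha (Finset.mem_of_mem_erase h))]
      have h2 : ∏ j ∈ t, x j ≤ (∑ j ∈ t, x j) ^ t.card := by
        calc ∏ j ∈ t, x j ≤ ∏ j ∈ t, (∑ k ∈ t, x k) :=
              Finset.prod_le_prod (fun j _ => hx j)
                (fun j hj => Finset.single_le_sum (fun k _ => hx k) hj)
          _ = (∑ j ∈ t, x j) ^ t.card := Finset.prod_const _
      have h3 : x a * ∑ i ∈ t, ∏ j ∈ t.erase i, x j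
          ≤ x a * (∑ j ∈ t, x j) ^ (t.card - 1) :=
        mul_le_mul_of_nonneg_left (IH ht) (hx a)
      have h4 : (∑ j ∈ t, x j) ^ t.card + x a * (∑ j ∈ t, x j) ^ (t.card - 1)
          ≤ (x a + ∑ j ∈ t, x j) ^ (t.card + 1 - 1) := by
        have e : (∑ j ∈ t, x j) ^ t.card
            = (∑ j ∈ t, x j) ^ (t.card - 1) * (∑ j ∈ t, x j) := by
          rw [← pow_succ]; congr 1; omega
        rw [e]
        have e2 : (∑ j ∈ t, x j) ^ (t.card - 1) * (∑ j ∈ t, x j)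
            + x a * (∑ j ∈ t, x j) ^ (t.card - 1)
            = (∑ j ∈ t, x j) ^ (t.card - 1) * (x a + ∑ j ∈ t, x j) := by ring
        rw [e2]
        have hpow : (∑ j ∈ t, x j) ^ (t.card - 1) ≤ (x a + ∑ j ∈ t, x j) ^ (t.card - 1) :=
          pow_le_pow_left₀ hst (by linarith [hx a]) _
        calc (∑ j ∈ t, x j) ^ (t.card - 1) * (x a + ∑ j ∈ t, x j)
            ≤ (x a + ∑ j ∈ t, x j) ^ (t.card - 1) * (x a + ∑ j ∈ t, x j) :=
              mul_le_mul_of_nonneg_right hpow (by linarith [hx a])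
          _ = (x a + ∑ j ∈ t, x j) ^ (t.card + 1 - 1) := by
              rw [← pow_succ]; congr 1; omega
      calc (∏ j ∈ t, x j) + ∑ i ∈ t, ∏ j ∈ (insert a t).erase i, x j
          ≤ (∑ j ∈ t, x j) ^ t.card + x a * (∑ j ∈ t, x j) ^ (t.card - 1) := by
            rw [h1]; exact add_le_add h2 h3
        _ ≤ (x a + ∑ j ∈ t, x j) ^ (t.card + 1 - 1) := h4
        _ = (∑ j ∈ insert a t, x j) ^ (t.card + 1 - 1) := by rw [Finset.sum_insert ha]

theorem sum_inv_ge (n : ℕ) (hn : 2 ≤ n) (lam : Fin n → ℝ) (hlam : ∀ i, -1 < lam i)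
    (F : ℝ) (hF : ∏ i, (1 + lam i) = Real.exp F) :
    ∑ i, 1 / (1 + lam i) ≥
      (∑ i, (1 + lam i)) ^ (1 / ((n : ℝ) - 1)) * Real.exp (-F / ((n : ℝ) - 1)) := by
  have hpos : ∀ i, 0 < 1 + lam i := fun i => by linarith [hlam i]
  have hn' : (2:ℝ) ≤ (n:ℝ) := by exact_mod_cast hn
  have hd : (0:ℝ) < (n:ℝ) - 1 := by linarith
  have hne : (Finset.univ : Finset (Fin n)).Nonempty :=
    ⟨⟨0, by omega⟩, Finset.mem_univ _⟩
  have hP : 0 < ∏ i, (1 + lam i) := Finset.prod_pos fun i _ => hpos i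
  have hS : 0 < ∑ i, (1 + lam i) := Finset.sum_pos (fun i _ => hpos i) hne
  have hT : 0 < ∑ i, 1 / (1 + lam i) :=
    Finset.sum_pos (fun i _ => by have := hpos i; positivity) hne
  -- key inequality
  have key : (∑ i, (1 + lam i)) / (∏ i, (1 + lam i)) ≤ (∑ i, 1 / (1 + lam i)) ^ (n - 1) := by
    have h1 : ∑ i, ∏ j ∈ Finset.univ.erase i, (1 / (1 + lam j))
        ≤ (∑ i, 1 / (1 + lam i)) ^ (n - 1) := by
      have h := aux_sum_prod_erase (fun j => 1 / (1 + lam j))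
        (fun j => by have := hpos j; positivity) Finset.univ hne
      simpa only [Finset.card_univ, Fintype.card_fin] using h
    have h2 : ∀ i : Fin n, ∏ j ∈ Finset.univ.erase i, (1 / (1 + lam j))
        = (1 + lam i) / ∏ j, (1 + lam j) := by
      intro i
      have hm : (1 + lam i) * ∏ j ∈ Finset.univ.erase i, (1 + lam j)
          = ∏ j, (1 + lam j) :=
        Finset.mul_prod_erase Finset.univ (fun j => 1 + lam j) (Finset.mem_univ i)
      have hp' : 0 < ∏ j ∈ Finset.univ.erase i, (1 + lam j) :=
        Finset.prod_pos fun j _ => hpos j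
      rw [Finset.prod_div_distrib, Finset.prod_const_one]
      rw [eq_div_iff hP.ne', ← hm]
      field_simp
    calc (∑ i, (1 + lam i)) / (∏ i, (1 + lam i))
        = ∑ i, ∏ j ∈ Finset.univ.erase i, (1 / (1 + lam j)) := by
          rw [Finset.sum_congr rfl fun i _ => h2 i, ← Finset.sum_div]
      _ ≤ (∑ i, 1 / (1 + lam i)) ^ (n - 1) := h1
  -- convert via rpow
  have hc : (0:ℝ) < 1 / ((n:ℝ) - 1) := by positivity
  have hcast : ((n - 1 : ℕ) : ℝ) = (n:ℝ) - 1 := by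
    push_cast [Nat.cast_sub (by omega : 1 ≤ n)]; ring
  have hr : ((∑ i, (1 + lam i)) / (∏ i, (1 + lam i))) ^ (1 / ((n:ℝ) - 1))
      ≤ ∑ i, 1 / (1 + lam i) := by
    have h := Real.rpow_le_rpow (by positivity) key hc.le
    rwa [← Real.rpow_natCast (∑ i, 1 / (1 + lam i)) (n - 1), hcast,
      ← Real.rpow_mul hT.le, mul_one_div_cancel hd.ne', Real.rpow_one] at h
  have hexp : Real.exp (-F / ((n:ℝ) - 1))
      = (∏ i, (1 + lam i)) ^ (-(1 / ((n:ℝ) - 1))) := by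
    rw [hF, ← Real.exp_mul]
    congr 1
    field_simp
  calc (∑ i, (1 + lam i)) ^ (1 / ((n:ℝ) - 1)) * Real.exp (-F / ((n:ℝ) - 1))
      = (∑ i, (1 + lam i)) ^ (1 / ((n:ℝ) - 1))
        * (∏ i, (1 + lam i)) ^ (-(1 / ((n:ℝ) - 1))) := by rw [hexp]
    _ = ((∑ i, (1 + lam i)) / (∏ i, (1 + lam i))) ^ (1 / ((n:ℝ) - 1)) := by
        rw [Real.rpow_neg hP.le, Real.div_rpow hS.le hP.le]; ring
    _ ≤ ∑ i, 1 / (1 + lam i) := hr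
end

section
/- Let λ_1, ..., λ_n be reals with λ_i > -1, let t_1, ..., t_n be reals, and let S := ∑_j (1+λ_j). Suppose t_i² ≤ S for each i. Then for each i, t_i²/(1+λ_i) + S^(1/(n-1)) ≥ n(n-1)^((1-n)/n) |t_i|^(2/n). -/
theorem pointwise_eigenvalue_ineq (n : ℕ) (hn : 2 ≤ n) (lam t : Fin n → ℝ)
    (hlam : ∀ i, -1 < lam i) (S : ℝ) (hS : S = ∑ j, (1 + lam j))
    (ht : ∀ i, t i ^ 2 ≤ S) (hle : ∀ i, 1 + lam i ≤ S) :
    ∀ i, t i ^ 2 / (1 + lam i) + S ^ (1 / ((n : ℝ) - 1)) ≥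
      (n : ℝ) * ((n : ℝ) - 1) ^ ((1 - (n : ℝ)) / (n : ℝ)) * |t i| ^ (2 / (n : ℝ)) := by
  intro i
  have hN : (2:ℝ) ≤ (n:ℝ) := by exact_mod_cast hn
  set N := (n:ℝ) with hNdef
  have hN0 : (0:ℝ) < N := by linarith
  have hN1 : (0:ℝ) < N - 1 := by linarith
  have ha : (0:ℝ) < 1 + lam i := by have := hlam i; linarith
  set a := 1 + lam i with ha'
  set x := t i ^ 2 with hx'
  have hx : (0:ℝ) ≤ x := sq_nonneg _
  have hSpos : (0:ℝ) < S := lt_of_lt_of_le ha (hle i)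
  have key := Real.geom_mean_le_arith_mean2_weighted
    (w₁ := 1/N) (w₂ := (N-1)/N) (p₁ := N * (x/a)) (p₂ := N/(N-1) * S ^ (1/(N-1)))
    (by positivity) (by positivity) (by positivity) (by positivity)
    (by field_simp; ring)
  have hrhs : (1/N) * (N * (x/a)) + ((N-1)/N) * (N/(N-1) * S ^ (1/(N-1)))
      = x/a + S ^ (1/(N-1)) := by field_simp
  -- rewrite the geometric mean
  have hgm : (N * (x/a)) ^ (1/N) * (N/(N-1) * S ^ (1/(N-1))) ^ ((N-1)/N)
      = N * (N-1) ^ ((1-N)/N) * ((x/a * S) ^ (1/N)) := by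
    rw [Real.mul_rpow hN0.le (by positivity),
        Real.mul_rpow (by positivity) (by positivity),
        Real.div_rpow hN0.le hN1.le,
        ← Real.rpow_mul hSpos.le]
    have h1 : N ^ (1/N) * (N ^ ((N-1)/N) / (N-1) ^ ((N-1)/N))
        = N * (N-1) ^ ((1-N)/N) := by
      have e1 : (1:ℝ)/N + (N-1)/N = 1 := by field_simp; ring
      have e2 : (1-N)/N = -((N-1)/N) := by ring
      rw [e2, Real.rpow_neg hN1.le, mul_div_assoc', ← Real.rpow_add hN0, e1,
          Real.rpow_one, div_eq_mul_inv]
    have e3 : 1/(N-1) * ((N-1)/N) = 1/N := by field_simp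
    rw [e3, Real.mul_rpow (by positivity) hSpos.le, ← h1]
    ring
  have hmono : x ^ (1/N) ≤ (x/a * S) ^ (1/N) := by
    apply Real.rpow_le_rpow hx _ (by positivity)
    calc x = x / a * a := by field_simp
    _ ≤ x / a * S := by
        apply mul_le_mul_of_nonneg_left (hle i) (by positivity)
  have habs : |t i| ^ (2/N) = x ^ (1/N) := by
    rw [hx', ← sq_abs, ← Real.rpow_natCast |t i| 2, ← Real.rpow_mul (abs_nonneg _)]
    norm_num
    rw [div_eq_mul_inv]
  have hfinal : N * (N-1) ^ ((1-N)/N) * |t i| ^ (2/N)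
      ≤ N * (N-1) ^ ((1-N)/N) * ((x/a * S) ^ (1/N)) := by
    rw [habs]
    exact mul_le_mul_of_nonneg_left hmono (by positivity)
  have := hfinal.trans ((hgm ▸ key).trans (le_of_eq hrhs))
  linarith
end
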